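/- Let p and q be positive integers, and let b_i = binom(i+p-1, q) for all positive integers i. Then there exist integers m_0, m_1, …, m_q, not depending on n, such that for all integers n ≥ 2, C^b(n+q+1) = ∑_{i=0}^{q} m_i · C^b(n+i) (an identity of integers). -/

import Mathlib

open Finset

/-- The number of generalized compositions of `n` with `k` parts, where the part `i`
comes in `b i` types: the sum over all `k`-tuples of positive integers summing to `n`
of the product of the `b`-values of the parts. -/
def genComp (b : ℕ → ℕ) (n k : ℕ) : ℕ :=
  ∑ f ∈ (Finset.Nat.antidiagonalTuple k n).filter (fun f => ∀ j, 0 < f j),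
    ∏ j, b (f j)

/-- The total number of generalized compositions of `n` (with any number of parts). -/
def genCompAll (b : ℕ → ℕ) (n : ℕ) : ℕ :=
  ∑ k ∈ Finset.range (n + 1), genComp b n k

/-
Splitting off the first part of a composition gives the renewal equation
`C(N) = ∑_{i ≥ 1} b_i C(N - i)` for `N ≥ 1`. Since `b_i = binom(i + p - 1, q)` is a polynomial of
degree `q` in `i`, its `(q + 1)`-st forward difference vanishes. Applying that difference operator
to the renewal equation at `n, …, n + q + 1` cancels every `C(i)` with `i < n`, and the
coefficients of the surviving `C(n + t)` depend only on `t`.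
-/

theorem Finset.Nat.sum_antidiagonalTuple_succ {M : Type*} [AddCommMonoid M] (k n : ℕ)
    (g : (Fin (k + 1) → ℕ) → M) :
    ∑ f ∈ Nat.antidiagonalTuple (k + 1) n, g f =
      ∑ p ∈ antidiagonal n, ∑ x ∈ Nat.antidiagonalTuple k p.2, g (Fin.cons p.1 x) := by
  have hfin : ∀ k m, Nat.antidiagonalTuple k m = finAntidiagonal k m := fun k m => by
    ext; simp [Nat.mem_antidiagonalTuple]
  simp only [hfin]
  rw [finAntidiagonal, finAntidiagonal.aux, sum_disjiUnion]
  simp [finAntidiagonal]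

theorem fwdDiff_iter_choose_eq_zero {j k : ℕ} (h : j < k) :
    (fwdDiff 1)^[k] (fun x ↦ x.choose j : ℕ → ℤ) = 0 := by
  obtain ⟨e, rfl⟩ := Nat.exists_eq_add_of_lt h
  have hconst : (fwdDiff 1)^[j] (fun x ↦ x.choose j : ℕ → ℤ) = fun _ ↦ 1 := by
    simpa using fwdDiff_iter_choose 0 j
  rw [show j + e + 1 = e + 1 + j by ring, Function.iterate_add_apply, hconst,
    Function.iterate_succ_apply, fwdDiff_const]
  exact Function.iterate_fixed (fwdDiff_const 1 0) e

section Convolution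

variable {c A r : ℕ → ℤ} {d : ℕ}

theorem sum_mul_shift_eq_of_convolution (hc0 : c 0 = 0)
    (hcr : ∀ m, 1 ≤ m → ∑ k ∈ range (d + 1), r k * c (m + k) = 0)
    (hA : ∀ N, 1 ≤ N → A N = ∑ p ∈ antidiagonal N, c p.1 * A p.2) {n : ℕ} (hn : 1 ≤ n) :
    ∑ k ∈ range (d + 1), r k * A (n + k) =
      ∑ t ∈ range (d + 1), (∑ k ∈ range (d + 1), r k * c (k - t)) * A (n + t) := by
  have hA' : ∀ k ∈ range (d + 1),
      A (n + k) = ∑ i ∈ range (n + d + 1), c (n + k - i) * A i := by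
    intro k hk
    rw [mem_range] at hk
    rw [hA _ (by omega), ← Nat.sum_antidiagonal_swap]
    simp only [Prod.fst_swap, Prod.snd_swap]
    rw [Nat.sum_antidiagonal_eq_sum_range_succ (fun i j => c j * A i)]
    refine sum_subset (range_subset_range.2 (by omega)) fun i _ hi => ?_
    rw [mem_range, not_lt] at hi
    rw [Nat.sub_eq_zero_of_le (by omega), hc0, zero_mul]
  calc ∑ k ∈ range (d + 1), r k * A (n + k)
      = ∑ i ∈ range (n + (d + 1)), (∑ k ∈ range (d + 1), r k * c (n + k - i)) * A i := by
        rw [sum_congr rfl fun k hk => by rw [hA' k hk, mul_sum], sum_comm]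
        exact sum_congr rfl fun i _ => by rw [sum_mul]; exact sum_congr rfl fun k _ => by ring
    _ = ∑ t ∈ range (d + 1), (∑ k ∈ range (d + 1), r k * c (k - t)) * A (n + t) := by
        rw [sum_range_add _ n (d + 1)]
        simp only [Nat.add_sub_add_left, add_eq_right]
        refine sum_eq_zero fun i hi => ?_
        simp_rw [Nat.sub_add_comm (mem_range.1 hi).le]
        rw [hcr _ (Nat.sub_pos_of_lt (mem_range.1 hi)), zero_mul]

theorem exists_linear_recurrence_of_convolution (hc0 : c 0 = 0) (hr : r d = 1)
    (hcr : ∀ m, 1 ≤ m → ∑ k ∈ range (d + 1), r k * c (m + k) = 0)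
    (hA : ∀ N, 1 ≤ N → A N = ∑ p ∈ antidiagonal N, c p.1 * A p.2) :
    ∃ m : ℕ → ℤ, ∀ n, 1 ≤ n → A (n + d) = ∑ i ∈ range d, m i * A (n + i) := by
  refine ⟨fun t => ∑ k ∈ range (d + 1), r k * c (k - t) - r t, fun n hn => ?_⟩
  have h := sum_mul_shift_eq_of_convolution hc0 hcr hA hn
  have htop : ∑ k ∈ range (d + 1), r k * c (k - d) = 0 :=
    sum_eq_zero fun k hk => by
      rw [Nat.sub_eq_zero_of_le (Nat.lt_succ_iff.1 (mem_range.1 hk)), hc0, mul_zero]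
  rw [sum_range_succ, sum_range_succ, htop, hr, zero_mul, one_mul] at h
  simp only [sub_mul, sum_sub_distrib]
  linarith

end Convolution

-- The weight of a first part `0` is set to `0`, not `b 0`: parts are positive, and the
-- convolution can then run over the whole antidiagonal.
theorem genComp_succ (b : ℕ → ℕ) (n k : ℕ) :
    genComp b n (k + 1) =
      ∑ p ∈ antidiagonal n, (if 0 < p.1 then b p.1 else 0) * genComp b p.2 k := by
  simp only [genComp, sum_filter, Nat.sum_antidiagonalTuple_succ, Fin.forall_fin_succ,
    Fin.prod_univ_succ, Fin.cons_zero, Fin.cons_succ, ite_and, mul_sum]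
  refine sum_congr rfl fun p _ => sum_congr rfl fun x _ => ?_
  split_ifs <;> simp

theorem genComp_eq_zero_of_lt (b : ℕ → ℕ) {n k : ℕ} (h : n < k) : genComp b n k = 0 := by
  refine sum_eq_zero fun f hf => absurd h (not_lt.2 ?_)
  rw [mem_filter, Nat.mem_antidiagonalTuple] at hf
  calc k = ∑ _ : Fin k, 1 := by simp
    _ ≤ ∑ j, f j := sum_le_sum fun j _ => hf.2 j
    _ = n := hf.1

theorem genCompAll_succ (b : ℕ → ℕ) (n : ℕ) :
    genCompAll b (n + 1) =
      ∑ p ∈ antidiagonal (n + 1), (if 0 < p.1 then b p.1 else 0) * genCompAll b p.2 := by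
  have hgenComp_zero : genComp b (n + 1) 0 = 0 := by simp [genComp]
  rw [genCompAll, sum_range_succ', hgenComp_zero, add_zero]
  simp only [genComp_succ]
  rw [sum_comm]
  refine sum_congr rfl fun p hp => ?_
  rw [HasAntidiagonal.mem_antidiagonal] at hp
  split_ifs with hpos
  · rw [← mul_sum, genCompAll]
    congr 1
    symm
    refine sum_subset (range_subset_range.2 (by omega)) fun k _ hk => ?_
    exact genComp_eq_zero_of_lt b (by simpa using hk)
  · simp

theorem genCompAll_linear_recurrence_general (p q : ℕ) (b : ℕ → ℕ)
    (hb : ∀ i, 1 ≤ i → b i = Nat.choose (i + p - 1) q) :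
    ∃ m : ℕ → ℤ, ∀ n : ℕ, 2 ≤ n →
      (genCompAll b (n + q + 1) : ℤ) =
        ∑ i ∈ Finset.range (q + 1), m i * (genCompAll b (n + i) : ℤ) := by
  have hdiff : ∀ m, 1 ≤ m → ∑ k ∈ range (q + 1 + 1), (-1) ^ (q + 1 - k) * ((q + 1).choose k : ℤ) *
      (if 0 < m + k then (b (m + k) : ℤ) else 0) = 0 := by
    intro m hm
    have h := congrFun (fwdDiff_iter_choose_eq_zero (Nat.lt_add_one q)) (m + p - 1)
    rw [fwdDiff_iter_eq_sum_shift, Pi.zero_apply] at h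
    rw [← h]
    refine sum_congr rfl fun k _ => ?_
    rw [if_pos (by omega), hb _ (by omega), smul_eq_mul, smul_eq_mul, mul_one,
      show m + k + p - 1 = m + p - 1 + k by omega]
  have hconv : ∀ N, 1 ≤ N → (genCompAll b N : ℤ) =
      ∑ p ∈ antidiagonal N, (if 0 < p.1 then (b p.1 : ℤ) else 0) * genCompAll b p.2 := by
    intro N hN
    obtain ⟨N, rfl⟩ := Nat.exists_eq_add_of_le' hN
    exact_mod_cast genCompAll_succ b N
  obtain ⟨m, hm⟩ := exists_linear_recurrence_of_convolution
    (c := fun i ↦ if 0 < i then (b i : ℤ) else 0) (A := fun n ↦ (genCompAll b n : ℤ))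
    (r := fun k ↦ (-1) ^ (q + 1 - k) * ((q + 1).choose k : ℤ)) (by simp) (by simp) hdiff hconv
  exact ⟨m, fun n hn => hm n (by omega)⟩

theorem genCompAll_linear_recurrence (p q : ℕ) (hp : 1 ≤ p) (hq : 1 ≤ q) (b : ℕ → ℕ)
    (hb : ∀ i, 1 ≤ i → b i = Nat.choose (i + p - 1) q) :
    ∃ m : ℕ → ℤ, ∀ n : ℕ, 2 ≤ n →
      (genCompAll b (n + q + 1) : ℤ) =
        ∑ i ∈ Finset.range (q + 1), m i * (genCompAll b (n + i) : ℤ) :=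
  genCompAll_linear_recurrence_general p q b hb
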